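/- Let E : ℝᵈ → ℝ be measurable with E̲ ≤ E(x) ≤ Ē for all x, let g be a probability density on ℝᵈ, and α > 0. Then the weighted mean x̂ = (∫ y e^{−αE(y)} g(y) dy)/(∫ e^{−αE(y)} g(y) dy) satisfies, for any x ∈ ℝᵈ, |x̂ − x|² ≤ e^{2α(Ē−E̲)} ∫ |y − x|² g(y) dy. -/
import Mathlib


open MeasureTheory

set_option maxHeartbeats 1000000 in
/-- For a probability measure μ (the density g dx) on ℝᵈ with finite second moment and
E̲ ≤ E ≤ Ē, the weighted mean x̂ = M_α⁻¹ ∫ y e^{−αE(y)} dμ satisfies, for any x,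
|x̂ − x|² ≤ e^{2α(Ē−E̲)} ∫ |y − x|² dμ(y). -/
theorem weighted_mean_jensen_bound (d : ℕ) (α Elow Eup : ℝ) (hα : 0 < α)
    (E : EuclideanSpace ℝ (Fin d) → ℝ) (hE : Measurable E)
    (hEb : ∀ x, Elow ≤ E x ∧ E x ≤ Eup)
    (μ : Measure (EuclideanSpace ℝ (Fin d))) [IsProbabilityMeasure μ]
    (hmom : Integrable (fun y => ‖y‖ ^ 2) μ)
    (hint : Integrable (fun y => Real.exp (-α * E y) • y) μ) :
    ∀ x : EuclideanSpace ℝ (Fin d),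
      ‖(∫ y, Real.exp (-α * E y) ∂μ)⁻¹ • (∫ y, Real.exp (-α * E y) • y ∂μ) - x‖ ^ 2
        ≤ Real.exp (2 * α * (Eup - Elow)) * ∫ y, ‖y - x‖ ^ 2 ∂μ := by
  intro x
  set f : EuclideanSpace ℝ (Fin d) → ℝ := fun y => Real.exp (-α * E y) with hf
  have hfmeas' : Measurable f := by
    apply Measurable.exp
    exact (measurable_const.mul hE)
  have hfpos : ∀ y, 0 < f y := fun y => Real.exp_pos _
  have hfub : ∀ y, f y ≤ Real.exp (-α * Elow) := by
    intro y
    exact Real.exp_le_exp.2 (by nlinarith [(hEb y).1])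
  have hflb : ∀ y, Real.exp (-α * Eup) ≤ f y := by
    intro y
    exact Real.exp_le_exp.2 (by nlinarith [(hEb y).2])
  have hfint : Integrable f μ := by
    refine (integrable_const (Real.exp (-α * Elow))).mono' hfmeas'.aestronglyMeasurable ?_
    filter_upwards with y
    rw [Real.norm_eq_abs, abs_of_pos (hfpos y)]
    exact hfub y
  set M : ℝ := ∫ y, f y ∂μ with hM
  have hMlb : Real.exp (-α * Eup) ≤ M := by
    calc Real.exp (-α * Eup) = ∫ _, Real.exp (-α * Eup) ∂μ := by simp
    _ ≤ M := integral_mono (integrable_const _) hfint hflb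
  have hMpos : 0 < M := lt_of_lt_of_le (Real.exp_pos _) hMlb
  -- integrability facts
  have hnorm_int : Integrable (fun y => ‖y‖) μ := by
    refine ((integrable_const (1:ℝ)).add hmom).mono' (continuous_norm.aestronglyMeasurable) ?_
    filter_upwards with y
    simp only [Pi.add_apply]
    rw [Real.norm_eq_abs, abs_of_nonneg (norm_nonneg _)]
    nlinarith [norm_nonneg y, sq_nonneg (‖y‖ - 1)]
  have hh_int : Integrable (fun y => ‖y - x‖) μ := by
    refine (hnorm_int.add (integrable_const ‖x‖)).mono' ?_ ?_
    · exact (continuous_norm.comp (continuous_id.sub continuous_const)).aestronglyMeasurable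
    · filter_upwards with y
      rw [Real.norm_eq_abs, abs_of_nonneg (norm_nonneg _)]
      exact norm_sub_le _ _
  have hh2_int : Integrable (fun y => ‖y - x‖ ^ 2) μ := by
    refine ((hmom.const_mul 2).add (integrable_const (2 * ‖x‖^2))).mono' ?_ ?_
    · exact ((continuous_norm.comp (continuous_id.sub continuous_const)).pow 2).aestronglyMeasurable
    · filter_upwards with y
      simp only [Pi.add_apply]
      rw [Real.norm_eq_abs, abs_of_nonneg (sq_nonneg _)]
      have h := norm_sub_le y x
      nlinarith [mul_self_le_mul_self (norm_nonneg (y - x)) h, sq_nonneg (‖y‖ - ‖x‖)]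
  have hfh_int : Integrable (fun y => f y * ‖y - x‖) μ := by
    refine (hh_int.const_mul (Real.exp (-α * Elow))).mono'
      (hfmeas'.aestronglyMeasurable.mul hh_int.aestronglyMeasurable) ?_
    filter_upwards with y
    rw [Real.norm_eq_abs, abs_of_nonneg (mul_nonneg (hfpos y).le (norm_nonneg _))]
    exact mul_le_mul_of_nonneg_right (hfub y) (norm_nonneg _)
  have hfsmul_int : Integrable (fun y => f y • (y - x)) μ := by
    have : (fun y => f y • (y - x)) = fun y => f y • y - f y • x := by
      funext y; rw [smul_sub]
    rw [this]
    exact hint.sub (hfint.smul_const x)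
  -- rewrite the difference
  have key : (∫ y, f y • y ∂μ) - M • x = ∫ y, f y • (y - x) ∂μ := by
    have h1 : (fun y => f y • (y - x)) = fun y => f y • y - f y • x := by
      funext y; rw [smul_sub]
    rw [h1, integral_sub hint (hfint.smul_const x), integral_smul_const]
  have hdiff : M⁻¹ • (∫ y, f y • y ∂μ) - x = M⁻¹ • ∫ y, f y • (y - x) ∂μ := by
    rw [← key, smul_sub, smul_smul, inv_mul_cancel₀ hMpos.ne', one_smul]
  set C : ℝ := Real.exp (α * (Eup - Elow)) with hC
  have hCpos : 0 < C := Real.exp_pos _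
  set I1 : ℝ := ∫ y, ‖y - x‖ ∂μ with hI1
  have hI1nonneg : 0 ≤ I1 := integral_nonneg fun y => norm_nonneg _
  have hbound : ‖M⁻¹ • (∫ y, f y • y ∂μ) - x‖ ≤ C * I1 := by
    rw [hdiff, norm_smul, Real.norm_eq_abs, abs_of_pos (inv_pos.2 hMpos)]
    have h2 : ‖∫ y, f y • (y - x) ∂μ‖ ≤ ∫ y, f y * ‖y - x‖ ∂μ := by
      calc ‖∫ y, f y • (y - x) ∂μ‖ ≤ ∫ y, ‖f y • (y - x)‖ ∂μ :=
            norm_integral_le_integral_norm _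
        _ = ∫ y, f y * ‖y - x‖ ∂μ := by
            congr 1; funext y
            rw [norm_smul, Real.norm_eq_abs, abs_of_pos (hfpos y)]
    have h3 : (∫ y, f y * ‖y - x‖ ∂μ) ≤ Real.exp (-α * Elow) * I1 := by
      rw [hI1, ← integral_const_mul]
      exact integral_mono hfh_int (hh_int.const_mul _) fun y =>
        mul_le_mul_of_nonneg_right (hfub y) (norm_nonneg _)
    have h4 : M⁻¹ ≤ Real.exp (α * Eup) := by
      have he : Real.exp (α * Eup) = (Real.exp (-α * Eup))⁻¹ := by
        rw [← Real.exp_neg]; ring_nf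
      rw [he]
      exact inv_anti₀ (Real.exp_pos _) hMlb
    calc M⁻¹ * ‖∫ y, f y • (y - x) ∂μ‖ ≤ M⁻¹ * (Real.exp (-α * Elow) * I1) := by
          exact mul_le_mul_of_nonneg_left (le_trans h2 h3) (inv_pos.2 hMpos).le
      _ ≤ Real.exp (α * Eup) * (Real.exp (-α * Elow) * I1) := by
          exact mul_le_mul_of_nonneg_right h4 (mul_nonneg (Real.exp_pos _).le hI1nonneg)
      _ = C * I1 := by rw [hC, ← mul_assoc, ← Real.exp_add]; ring_nf
  have hjensen : I1 ^ 2 ≤ ∫ y, ‖y - x‖ ^ 2 ∂μ :=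
    (even_two.convexOn_pow).map_integral_le ((continuous_pow 2).continuousOn)
      isClosed_univ (Filter.Eventually.of_forall fun y => Set.mem_univ _) hh_int hh2_int
  calc ‖M⁻¹ • (∫ y, f y • y ∂μ) - x‖ ^ 2 ≤ (C * I1) ^ 2 := by
        exact pow_le_pow_left₀ (norm_nonneg _) hbound 2
    _ = C ^ 2 * I1 ^ 2 := by ring
    _ ≤ C ^ 2 * ∫ y, ‖y - x‖ ^ 2 ∂μ := by
        exact mul_le_mul_of_nonneg_left hjensen (sq_nonneg _)
    _ = Real.exp (2 * α * (Eup - Elow)) * ∫ y, ‖y - x‖ ^ 2 ∂μ := by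
        rw [hC, ← Real.exp_nat_mul]; ring_nf
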